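/- Let λ < 0 and ε > 0 with λ + 6ε < 0 and e^{λ}·(e^ε − 1) ≤ 1, and set s := Σ_{m≥0} e^{m(λ+6ε)}. Let (q_n)_{n≥0} be positive reals with e^{−ε}·q_n ≤ q_{n+1} ≤ e^{ε}·q_n, and for each n let F_n : D(q_n) → D(q_{n+1}) be holomorphic with F_n(0) = 0 and m_n := F_n'(0) satisfying e^{λ−ε} ≤ |m_n| ≤ e^{λ+ε}. Set q'_n := (e^{λ}(e^ε − 1)/2)·q_n and Q_n := 2·e^{−λ+2ε}/q_n, and define η̃_{m,n} on D(q'_n) by η̃_{0,n}(z) := z and η̃_{m,n}(z) := (F_{n+m−1} ∘ ⋯ ∘ F_n)(z)/(m_n·⋯·m_{n+m−1}). Then for each n the sequence (η̃_{m,n})_{m≥0} converges, uniformly on compact subsets of D(q'_n), to a holomorphic function η̃_n : D(q'_n) → ℂ satisfying η̃_n(0) = 0, η̃_n'(0) = 1, |η̃_n(z) − z| ≤ s·Q_n·|z|² for all z ∈ D(q'_n), and η̃_{n+1}(F_n(z)) = m_n·η̃_n(z) for all z ∈ D(q'_n). -/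

import Mathlib

/-- The composition `F_{n+m-1} ∘ ⋯ ∘ F_n` (equal to the identity when `m = 0`). -/
noncomputable def compChain (F : ℕ → ℂ → ℂ) : ℕ → ℕ → ℂ → ℂ
  | 0, _, z => z
  | m + 1, n, z => compChain F m (n + 1) (F n z)

/-- The renormalized compositions
`η̃_{m,n}(z) = (F_{n+m-1} ∘ ⋯ ∘ F_n)(z) / (m_n ⋯ m_{n+m-1})`. -/
noncomputable def etaTilde (F : ℕ → ℂ → ℂ) (m : ℕ → ℂ) (k n : ℕ) (z : ℂ) : ℂ :=
  compChain F k n z / ∏ i ∈ Finset.range k, m (n + i)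

/-!
Each `F_n` differs from its linear part by at most `2e^ε/q_n · |z|²` (the Schwarz lemma applied to
`F_n` and then to its slope at `0`). On the disks `D(q'_n)` the maps therefore contract by
`e^{λ+2ε}` and send `D(q'_n)` into `D(q'_{n+1})`. Writing `w` for the `k`-th iterate of `z`,
`η̃_{k+1,n}(z) - η̃_{k,n}(z) = (F(w) - m w)/(m_n ⋯ m_{n+k})` has numerator
`O(e^{2k(λ+2ε)+kε} |z|²/q_n)` and denominator at least `e^{(k+1)(λ-ε)}`, hence is
`O(e^{k(λ+6ε)} |z|²)`. So the telescoping series converges uniformly, the limit is holomorphic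
and quadratically close to the identity (hence tangent to it), and the conjugacy passes to the
limit from `η̃_{k+1,n} = η̃_{k,n+1} ∘ F_n / m_n`.
-/

open Metric Set Filter Topology Real

theorem norm_sub_deriv_mul_le_of_mapsTo_ball {f : ℂ → ℂ} {r R : ℝ} {z : ℂ}
    (hf : DifferentiableOn ℂ f (ball 0 r)) (hmaps : MapsTo f (ball 0 r) (ball 0 R))
    (hf0 : f 0 = 0) (hz : z ∈ ball 0 r) :
    ‖f z - deriv f 0 * z‖ ≤ 2 * R / r ^ 2 * ‖z‖ ^ 2 := by
  have hr : 0 < r := pos_of_mem_ball hz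
  set g := dslope f 0
  have hg : ∀ w ∈ ball (0 : ℂ) r, ‖g w‖ ≤ R / r := fun w hw =>
    Complex.norm_dslope_le_div_of_mapsTo_ball hf
      (by rw [hf0]; exact hmaps.mono_right ball_subset_closedBall) hw
  have hgmaps : MapsTo g (ball 0 r) (closedBall (g 0) (2 * R / r)) := fun w hw => by
    rw [mem_closedBall, dist_eq_norm]
    calc ‖g w - g 0‖ ≤ ‖g w‖ + ‖g 0‖ := norm_sub_le _ _
      _ ≤ R / r + R / r := add_le_add (hg w hw) (hg 0 (mem_ball_self hr))
      _ = 2 * R / r := by ring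
  have hgd : DifferentiableOn ℂ g (ball 0 r) :=
    (Complex.differentiableOn_dslope (ball_mem_nhds 0 hr)).2 hf
  have hsq : f z - deriv f 0 * z = z ^ 2 * dslope g 0 z := by
    have h1 := sub_smul_dslope g 0 z
    have h2 := sub_smul_dslope f 0 z
    simp only [sub_zero, smul_eq_mul, hf0, g, dslope_same] at h1 h2
    linear_combination -h2 - z * h1
  calc ‖f z - deriv f 0 * z‖ = ‖z‖ ^ 2 * ‖dslope g 0 z‖ := by rw [hsq, norm_mul, norm_pow]
    _ ≤ ‖z‖ ^ 2 * (2 * R / r / r) := by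
      gcongr; exact Complex.norm_dslope_le_div_of_mapsTo_ball hgd hgmaps hz
    _ = 2 * R / r ^ 2 * ‖z‖ ^ 2 := by ring

theorem hasDerivAt_one_of_norm_sub_le_sq {𝕜 : Type*} [NontriviallyNormedField 𝕜] {f : 𝕜 → 𝕜}
    {C : ℝ} (h : ∀ᶠ z in 𝓝 0, ‖f z - z‖ ≤ C * ‖z‖ ^ 2) : HasDerivAt f 1 0 := by
  have hf0 : f 0 = 0 := by simpa using h.self_of_nhds
  rw [hasDerivAt_iff_isLittleO]
  simp only [hf0, sub_zero, smul_eq_mul, mul_one]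
  refine (Asymptotics.IsBigO.of_bound C ?_).trans_isLittleO
    (Asymptotics.isLittleO_pow_id one_lt_two)
  simpa only [norm_pow] using h

theorem tendstoUniformlyOn_of_norm_sub_succ_le {α E : Type*} [NormedAddCommGroup E]
    [CompleteSpace E] {f : ℕ → α → E} {u : ℕ → ℝ} {s : Set α} (hu : Summable u)
    (hf : ∀ k, ∀ x ∈ s, ‖f (k + 1) x - f k x‖ ≤ u k) :
    TendstoUniformlyOn f (fun x => f 0 x + ∑' k, (f (k + 1) x - f k x)) atTop s := by
  have hsum := tendstoUniformlyOn_tsum_nat hu hf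
  rw [Metric.tendstoUniformlyOn_iff] at hsum ⊢
  intro δ hδ
  filter_upwards [hsum δ hδ] with N hN x hx
  simpa [Finset.sum_range_sub (f · x), dist_add_left, add_comm] using hN x hx

theorem le_pow_mul_of_le_mul_succ {q : ℕ → ℝ} {a : ℝ} (ha : 0 ≤ a)
    (h : ∀ j, q j ≤ a * q (j + 1)) (n k : ℕ) : q n ≤ a ^ k * q (n + k) := by
  induction k with
  | zero => simp
  | succ k ih =>
    calc q n ≤ a ^ k * q (n + k) := ih
      _ ≤ a ^ k * (a * q (n + k + 1)) := by gcongr; exact h _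
      _ = a ^ (k + 1) * q (n + (k + 1)) := by ring_nf

section compChain

variable {F : ℕ → ℂ → ℂ}

theorem compChain_succ' (k n : ℕ) (z : ℂ) :
    compChain F (k + 1) n z = F (n + k) (compChain F k n z) := by
  induction k generalizing n z with
  | zero => rfl
  | succ k ih => rw [compChain, ih, compChain, add_right_comm, add_assoc]

theorem mapsTo_compChain {s : ℕ → Set ℂ} (hF : ∀ j, MapsTo (F j) (s j) (s (j + 1))) (k n : ℕ) :
    MapsTo (compChain F k n) (s n) (s (n + k)) := by
  induction k generalizing n with
  | zero => exact mapsTo_id _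
  | succ k ih =>
    rw [show n + (k + 1) = n + 1 + k by ring]
    exact (ih (n + 1)).comp (hF n)

theorem differentiableOn_compChain {s : ℕ → Set ℂ} (hF : ∀ j, DifferentiableOn ℂ (F j) (s j))
    (hmaps : ∀ j, MapsTo (F j) (s j) (s (j + 1))) (k n : ℕ) :
    DifferentiableOn ℂ (compChain F k n) (s n) := by
  induction k generalizing n with
  | zero => exact differentiableOn_id
  | succ k ih => exact (ih (n + 1)).comp (hF n) (hmaps n)

theorem norm_compChain_le {s : ℕ → Set ℂ} {ρ : ℝ} (hρ : 0 ≤ ρ)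
    (hmaps : ∀ j, MapsTo (F j) (s j) (s (j + 1))) (hF : ∀ j, ∀ w ∈ s j, ‖F j w‖ ≤ ρ * ‖w‖)
    {n : ℕ} {z : ℂ} (hz : z ∈ s n) (k : ℕ) : ‖compChain F k n z‖ ≤ ρ ^ k * ‖z‖ := by
  induction k with
  | zero => simp [compChain]
  | succ k ih =>
    rw [compChain_succ', pow_succ', mul_assoc]
    exact (hF _ _ (mapsTo_compChain hmaps k n hz)).trans (by gcongr)

end compChain

section etaTilde

variable {F : ℕ → ℂ → ℂ} {m : ℕ → ℂ}

theorem etaTilde_zero (n : ℕ) (z : ℂ) : etaTilde F m 0 n z = z := by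
  simp [etaTilde, compChain]

theorem etaTilde_succ (k n : ℕ) (z : ℂ) :
    etaTilde F m (k + 1) n z = etaTilde F m k (n + 1) (F n z) / m n := by
  simp only [etaTilde, compChain, Finset.prod_range_succ', add_zero, div_div, add_right_comm,
    add_assoc]

theorem etaTilde_succ_sub {k n : ℕ} (hm : m (n + k) ≠ 0) (z : ℂ) :
    etaTilde F m (k + 1) n z - etaTilde F m k n z =
      (F (n + k) (compChain F k n z) - m (n + k) * compChain F k n z) /
        ∏ i ∈ Finset.range (k + 1), m (n + i) := by
  rw [etaTilde, etaTilde, compChain_succ', Finset.prod_range_succ, sub_div,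
    mul_comm (∏ i ∈ Finset.range k, m (n + i)), ← div_div, ← div_div, mul_div_cancel_left₀ _ hm]

theorem pow_le_norm_prod {a : ℝ} (ha : ∀ i, a ≤ ‖m i‖) (ha0 : 0 ≤ a) (k n : ℕ) :
    a ^ k ≤ ‖∏ i ∈ Finset.range k, m (n + i)‖ := by
  rw [norm_prod]
  simpa using Finset.prod_le_prod (s := Finset.range k) (fun _ _ => ha0) (fun i _ => ha (n + i))

end etaTilde

/-- The limit `η̃_n`, as the telescoping series of the `η̃_{k,n}`. -/
noncomputable def straightening (F : ℕ → ℂ → ℂ) (m : ℕ → ℂ) (n : ℕ) (z : ℂ) : ℂ :=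
  z + ∑' k, (etaTilde F m (k + 1) n z - etaTilde F m k n z)

/-- `c * q n` is the radius `q'_n` of the disks on which the `η̃_{k,n}` converge. -/
structure StraighteningHyp (lam ε c : ℝ) (q : ℕ → ℝ) (F : ℕ → ℂ → ℂ) (m : ℕ → ℂ) : Prop where
  q_pos : ∀ n, 0 < q n
  q_succ : ∀ n, exp (-ε) * q n ≤ q (n + 1) ∧ q (n + 1) ≤ exp ε * q n
  differentiableOn : ∀ n, DifferentiableOn ℂ (F n) (ball 0 (q n))
  mapsTo : ∀ n, MapsTo (F n) (ball 0 (q n)) (ball 0 (q (n + 1)))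
  map_zero : ∀ n, F n 0 = 0
  eq_deriv : ∀ n, m n = deriv (F n) 0
  exp_le_norm : ∀ n, exp (lam - ε) ≤ ‖m n‖
  norm_le_exp : ∀ n, ‖m n‖ ≤ exp (lam + ε)
  ε_pos : 0 < ε
  rate : lam + 6 * ε < 0
  c_pos : 0 < c
  c_le_one : c ≤ 1
  two_mul_c_le : 2 * c ≤ exp lam * (exp ε - 1)

namespace StraighteningHyp

variable {lam ε c : ℝ} {q : ℕ → ℝ} {F : ℕ → ℂ → ℂ} {m : ℕ → ℂ}

theorem m_ne_zero (h : StraighteningHyp lam ε c q F m) (n : ℕ) : m n ≠ 0 :=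
  norm_pos_iff.1 ((exp_pos _).trans_le (h.exp_le_norm n))

theorem ball_mul_subset_ball (h : StraighteningHyp lam ε c q F m) (n : ℕ) :
    ball (0 : ℂ) (c * q n) ⊆ ball 0 (q n) :=
  Metric.ball_subset_ball (mul_le_of_le_one_left (h.q_pos n).le h.c_le_one)

theorem le_exp_mul_succ (h : StraighteningHyp lam ε c q F m) (n : ℕ) :
    q n ≤ exp ε * q (n + 1) := by
  have := (h.q_succ n).1
  rwa [exp_neg, inv_mul_le_iff₀ (exp_pos ε)] at this

theorem norm_sub_mul_le (h : StraighteningHyp lam ε c q F m) {j : ℕ} {w : ℂ}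
    (hw : w ∈ ball 0 (q j)) : ‖F j w - m j * w‖ ≤ 2 * exp ε / q j * ‖w‖ ^ 2 := by
  have hquad := norm_sub_deriv_mul_le_of_mapsTo_ball (h.differentiableOn j)
    ((h.mapsTo j).mono_right (Metric.ball_subset_ball (h.q_succ j).2)) (h.map_zero j) hw
  rw [← h.eq_deriv] at hquad
  convert hquad using 2
  field_simp [(h.q_pos j).ne']

theorem norm_apply_le (h : StraighteningHyp lam ε c q F m) {j : ℕ} {w : ℂ}
    (hw : w ∈ ball 0 (c * q j)) : ‖F j w‖ ≤ exp (lam + 2 * ε) * ‖w‖ := by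
  have hq := h.q_pos j
  have hwq : ‖w‖ ≤ c * q j := (mem_ball_zero_iff.1 hw).le
  have hquad := h.norm_sub_mul_le (h.ball_mul_subset_ball j hw)
  have hlin : ‖m j * w‖ ≤ exp lam * exp ε * ‖w‖ := by
    rw [norm_mul, ← exp_add]; gcongr; exact h.norm_le_exp j
  have hquad' : 2 * exp ε / q j * ‖w‖ ^ 2 ≤ exp ε * (2 * c) * ‖w‖ :=
    calc 2 * exp ε / q j * ‖w‖ ^ 2 = 2 * exp ε * ‖w‖ / q j * ‖w‖ := by ring
      _ ≤ 2 * exp ε * (c * q j) / q j * ‖w‖ := by gcongr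
      _ = exp ε * (2 * c) * ‖w‖ := by field_simp
  calc ‖F j w‖ ≤ ‖F j w - m j * w‖ + ‖m j * w‖ := norm_le_norm_sub_add _ _
    _ ≤ exp ε * (2 * c) * ‖w‖ + exp lam * exp ε * ‖w‖ := add_le_add (hquad.trans hquad') hlin
    _ ≤ exp ε * (exp lam * (exp ε - 1)) * ‖w‖ + exp lam * exp ε * ‖w‖ := by
      gcongr _ * ?_ * _ + _; exact h.two_mul_c_le
    _ = exp (lam + 2 * ε) * ‖w‖ := by rw [two_mul, exp_add, exp_add]; ring

theorem mapsTo_ball (h : StraighteningHyp lam ε c q F m) (j : ℕ) :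
    MapsTo (F j) (ball 0 (c * q j)) (ball 0 (c * q (j + 1))) := fun w hw => by
  rw [mem_ball_zero_iff] at hw ⊢
  calc ‖F j w‖ ≤ exp (lam + 2 * ε) * ‖w‖ := h.norm_apply_le (mem_ball_zero_iff.2 hw)
    _ < exp (lam + 2 * ε) * (c * q j) := by gcongr
    _ ≤ exp (lam + 2 * ε) * (c * (exp ε * q (j + 1))) := by
      gcongr; exacts [h.c_pos.le, h.le_exp_mul_succ j]
    _ = exp (lam + 3 * ε) * (c * q (j + 1)) := by
      rw [show lam + 3 * ε = lam + 2 * ε + ε by ring, exp_add (lam + 2 * ε)]; ring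
    _ ≤ c * q (j + 1) := by
      refine mul_le_of_le_one_left (mul_pos h.c_pos (h.q_pos _)).le (exp_le_one_iff.2 ?_)
      linarith [h.rate, h.ε_pos]

theorem differentiableOn_etaTilde (h : StraighteningHyp lam ε c q F m) (k n : ℕ) :
    DifferentiableOn ℂ (etaTilde F m k n) (ball 0 (c * q n)) :=
  (differentiableOn_compChain (fun j => (h.differentiableOn j).mono (h.ball_mul_subset_ball j))
    h.mapsTo_ball k n).div_const _

theorem norm_etaTilde_succ_sub_le (h : StraighteningHyp lam ε c q F m) {n : ℕ} {z : ℂ}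
    (hz : z ∈ ball 0 (c * q n)) (k : ℕ) :
    ‖etaTilde F m (k + 1) n z - etaTilde F m k n z‖ ≤
      2 * exp (-lam + 2 * ε) / q n * exp (k * (lam + 6 * ε)) * ‖z‖ ^ 2 := by
  set w := compChain F k n z
  have hw : w ∈ ball 0 (c * q (n + k)) := mapsTo_compChain h.mapsTo_ball k n hz
  have hwz : ‖w‖ ≤ exp (lam + 2 * ε) ^ k * ‖z‖ :=
    norm_compChain_le (exp_pos _).le h.mapsTo_ball (fun _ _ => h.norm_apply_le) hz k
  have hden : exp (lam - ε) ^ (k + 1) ≤ ‖∏ i ∈ Finset.range (k + 1), m (n + i)‖ :=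
    pow_le_norm_prod h.exp_le_norm (exp_pos _).le (k + 1) n
  have hq : 2 * exp ε / q (n + k) ≤ 2 * exp ε * exp ε ^ k / q n := by
    have := le_pow_mul_of_le_mul_succ (exp_pos _).le h.le_exp_mul_succ n k
    rw [div_le_div_iff₀ (h.q_pos _) (h.q_pos _), mul_assoc (2 * exp ε)]
    gcongr
  have hexp : exp ε * exp ε ^ k * (exp (lam + 2 * ε) ^ k) ^ 2 =
      exp (-lam + 2 * ε) * exp (k * (lam + 6 * ε)) * exp (lam - ε) ^ (k + 1) := by
    simp only [← exp_nat_mul, ← exp_add]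
    congr 1; push_cast; ring
  have := h.q_pos n
  have := h.q_pos (n + k)
  rw [etaTilde_succ_sub (h.m_ne_zero _), norm_div]
  calc _ ≤ 2 * exp ε / q (n + k) * ‖w‖ ^ 2 / exp (lam - ε) ^ (k + 1) :=
        div_le_div₀ (by positivity) (h.norm_sub_mul_le (h.ball_mul_subset_ball _ hw))
          (by positivity) hden
    _ ≤ 2 * exp ε * exp ε ^ k / q n * (exp (lam + 2 * ε) ^ k * ‖z‖) ^ 2 /
        exp (lam - ε) ^ (k + 1) := by gcongr
    _ = 2 * (exp ε * exp ε ^ k * (exp (lam + 2 * ε) ^ k) ^ 2) /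
        (q n * exp (lam - ε) ^ (k + 1)) * ‖z‖ ^ 2 := by ring
    _ = _ := by rw [hexp]; field_simp


theorem tendstoUniformlyOn_straightening (h : StraighteningHyp lam ε c q F m) (n : ℕ) :
    TendstoUniformlyOn (fun k => etaTilde F m k n) (straightening F m n) atTop
      (ball 0 (c * q n)) := by
  have hq := h.q_pos n
  have hu := ((summable_exp_nat_mul_iff.2 h.rate).mul_left
    (2 * exp (-lam + 2 * ε) / q n)).mul_right ((c * q n) ^ 2)
  have := tendstoUniformlyOn_of_norm_sub_succ_le (f := fun k => etaTilde F m k n) hu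
    fun k z hz => (h.norm_etaTilde_succ_sub_le hz k).trans
      (by gcongr; exact (mem_ball_zero_iff.1 hz).le)
  simp only [etaTilde_zero] at this
  exact this

theorem differentiableOn_straightening (h : StraighteningHyp lam ε c q F m) (n : ℕ) :
    DifferentiableOn ℂ (straightening F m n) (ball 0 (c * q n)) :=
  (h.tendstoUniformlyOn_straightening n).tendstoLocallyUniformlyOn.differentiableOn
    (Eventually.of_forall fun k => h.differentiableOn_etaTilde k n) isOpen_ball

theorem norm_straightening_sub_le (h : StraighteningHyp lam ε c q F m) (n : ℕ) :
    ∀ z ∈ ball (0 : ℂ) (c * q n), ‖straightening F m n z - z‖ ≤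
      (∑' k : ℕ, exp (k * (lam + 6 * ε))) * (2 * exp (-lam + 2 * ε) / q n) * ‖z‖ ^ 2 := by
  intro z hz
  rw [straightening, add_sub_cancel_left, mul_comm (∑' k : ℕ, _)]
  exact tsum_of_norm_bounded
    (((summable_exp_nat_mul_iff.2 h.rate).hasSum.mul_left _).mul_right _)
    (h.norm_etaTilde_succ_sub_le hz)

theorem hasDerivAt_straightening (h : StraighteningHyp lam ε c q F m) (n : ℕ) :
    HasDerivAt (straightening F m n) 1 0 :=
  hasDerivAt_one_of_norm_sub_le_sq <|
    eventually_of_mem (ball_mem_nhds 0 (mul_pos h.c_pos (h.q_pos n)))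
      (h.norm_straightening_sub_le n)

theorem straightening_succ_comp (h : StraighteningHyp lam ε c q F m) (n : ℕ) :
    ∀ z ∈ ball (0 : ℂ) (c * q n),
      straightening F m (n + 1) (F n z) = m n * straightening F m n z := by
  intro z hz
  have hlim := ((h.tendstoUniformlyOn_straightening (n + 1)).tendsto_at
    (h.mapsTo_ball n hz)).div_const (m n)
  have hlim' := ((h.tendstoUniformlyOn_straightening n).tendsto_at hz).comp
    (tendsto_add_atTop_nat 1)
  simp only [Function.comp_def, etaTilde_succ] at hlim'
  rw [← tendsto_nhds_unique hlim hlim', mul_div_cancel₀ _ (h.m_ne_zero n)]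

end StraighteningHyp

theorem etaTilde_convergence_general
    (lam ε : ℝ) (hε : 0 < ε) (h6 : lam + 6 * ε < 0)
    (hcond : Real.exp lam * (Real.exp ε - 1) ≤ 1)
    (s : ℝ) (hs : s = ∑' m : ℕ, Real.exp ((m : ℝ) * (lam + 6 * ε)))
    (q : ℕ → ℝ) (hq0 : ∀ n, 0 < q n)
    (hqtemp : ∀ n, Real.exp (-ε) * q n ≤ q (n + 1) ∧ q (n + 1) ≤ Real.exp ε * q n)
    (F : ℕ → ℂ → ℂ)
    (hFhol : ∀ n, DifferentiableOn ℂ (F n) (Metric.ball 0 (q n)))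
    (hFmaps : ∀ n, Set.MapsTo (F n) (Metric.ball 0 (q n)) (Metric.ball 0 (q (n + 1))))
    (hF0 : ∀ n, F n 0 = 0)
    (m : ℕ → ℂ) (hm : ∀ n, m n = deriv (F n) 0)
    (hmlow : ∀ n, Real.exp (lam - ε) ≤ ‖m n‖)
    (hmup : ∀ n, ‖m n‖ ≤ Real.exp (lam + ε))
    (q' : ℕ → ℝ) (hq' : ∀ n, q' n = Real.exp lam * (Real.exp ε - 1) / 2 * q n)
    (Q : ℕ → ℝ) (hQ : ∀ n, Q n = 2 * Real.exp (-lam + 2 * ε) / q n) :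
    ∃ η : ℕ → ℂ → ℂ,
      (∀ n, TendstoLocallyUniformlyOn (fun k => etaTilde F m k n) (η n)
          Filter.atTop (Metric.ball 0 (q' n))) ∧
      (∀ n, DifferentiableOn ℂ (η n) (Metric.ball 0 (q' n))) ∧
      (∀ n, η n 0 = 0) ∧
      (∀ n, deriv (η n) 0 = 1) ∧
      (∀ n, ∀ z ∈ Metric.ball (0 : ℂ) (q' n),
        ‖η n z - z‖ ≤ s * Q n * ‖z‖ ^ 2) ∧
      (∀ n, ∀ z ∈ Metric.ball (0 : ℂ) (q' n),
        η (n + 1) (F n z) = m n * η n z) := by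
  have h : StraighteningHyp lam ε (exp lam * (exp ε - 1) / 2) q F m :=
    { q_pos := hq0, q_succ := hqtemp, differentiableOn := hFhol, mapsTo := hFmaps,
      map_zero := hF0, eq_deriv := hm, exp_le_norm := hmlow, norm_le_exp := hmup,
      ε_pos := hε, rate := h6
      c_pos := div_pos (mul_pos (exp_pos _) (by linarith [add_one_lt_exp hε.ne'])) two_pos
      c_le_one := by linarith
      two_mul_c_le := by linarith }
  simp only [hq', hQ, hs]
  refine ⟨straightening F m,
    fun n => (h.tendstoUniformlyOn_straightening n).tendstoLocallyUniformlyOn,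
    h.differentiableOn_straightening, fun n => ?_, fun n => (h.hasDerivAt_straightening n).deriv,
    h.norm_straightening_sub_le, h.straightening_succ_comp⟩
  simpa using h.norm_straightening_sub_le n 0 (mem_ball_self (mul_pos h.c_pos (hq0 n)))

/-- **Existence of the straightening maps.** The renormalized compositions
`η̃_{k,n}` converge, uniformly on compact subsets of `D(q'_n)`, to holomorphic
maps `η̃_n` tangent to the identity at `0`, close to the identity, and
conjugating the dynamics of the `F_n` to the linear maps `z ↦ m_n · z`. -/
theorem etaTilde_convergence
    (lam ε : ℝ) (hlam : lam < 0) (hε : 0 < ε) (h6 : lam + 6 * ε < 0)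
    (hcond : Real.exp lam * (Real.exp ε - 1) ≤ 1)
    (s : ℝ) (hs : s = ∑' m : ℕ, Real.exp ((m : ℝ) * (lam + 6 * ε)))
    (q : ℕ → ℝ) (hq0 : ∀ n, 0 < q n)
    (hqtemp : ∀ n, Real.exp (-ε) * q n ≤ q (n + 1) ∧ q (n + 1) ≤ Real.exp ε * q n)
    (F : ℕ → ℂ → ℂ)
    (hFhol : ∀ n, DifferentiableOn ℂ (F n) (Metric.ball 0 (q n)))
    (hFmaps : ∀ n, Set.MapsTo (F n) (Metric.ball 0 (q n)) (Metric.ball 0 (q (n + 1))))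
    (hF0 : ∀ n, F n 0 = 0)
    (m : ℕ → ℂ) (hm : ∀ n, m n = deriv (F n) 0)
    (hmlow : ∀ n, Real.exp (lam - ε) ≤ ‖m n‖)
    (hmup : ∀ n, ‖m n‖ ≤ Real.exp (lam + ε))
    (q' : ℕ → ℝ) (hq' : ∀ n, q' n = Real.exp lam * (Real.exp ε - 1) / 2 * q n)
    (Q : ℕ → ℝ) (hQ : ∀ n, Q n = 2 * Real.exp (-lam + 2 * ε) / q n) :
    ∃ η : ℕ → ℂ → ℂ,
      (∀ n, TendstoLocallyUniformlyOn (fun k => etaTilde F m k n) (η n)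
          Filter.atTop (Metric.ball 0 (q' n))) ∧
      (∀ n, DifferentiableOn ℂ (η n) (Metric.ball 0 (q' n))) ∧
      (∀ n, η n 0 = 0) ∧
      (∀ n, deriv (η n) 0 = 1) ∧
      (∀ n, ∀ z ∈ Metric.ball (0 : ℂ) (q' n),
        ‖η n z - z‖ ≤ s * Q n * ‖z‖ ^ 2) ∧
      (∀ n, ∀ z ∈ Metric.ball (0 : ℂ) (q' n),
        η (n + 1) (F n z) = m n * η n z) :=
  etaTilde_convergence_general lam ε hε h6 hcond s hs q hq0 hqtemp F hFhol hFmaps hF0 m hm hmlow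
    hmup q' hq' Q hQ
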